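/- arXiv:1208.2226 — 3 statements merged into one kernel-verified Lean document; each statement's English description precedes it below -/
import Mathlib

section
/- Let F be a field of characteristic zero with a derivation δ, let K be a subfield of F closed under δ, and let η ∈ F be nonzero with F = K(η) and δη = p·η for some p ∈ K. Then for every c ∈ K the following are equivalent: (i) there exists f ∈ F with δf = c·η; (ii) there exists h ∈ K with c = δh + p·h. -/
/-!
Writing `f = g * η`, the equation `δ f = c * η` becomes `δ g + p * g = c`, so it suffices to have a
`K`-linear retraction `ρ : F → K` with `ρ 1 = 1` that commutes with `δ`: then `h = ρ g` works.

If `η` is algebraic, `ρ` is the coordinate along `1` in the power basis `1, η, …, η ^ (n - 1)`,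
since `δ (a * η ^ i) = (δ a + i * p * a) * η ^ i` preserves every coordinate line. If `η` is
transcendental, `F ≃ K(X)` embeds into the Laurent series `K⸨X⸩` with `η ↦ X`; there `δ` becomes
`∑ aₙ Xⁿ ↦ ∑ (δ aₙ + n * p * aₙ) Xⁿ`, because two derivations agreeing on generators agree, and `ρ`
is the constant coefficient.
-/

open IntermediateField

namespace Derivation

def ofLeibniz {A : Type*} [CommRing A] (δ : A → A) (hadd : ∀ a b, δ (a + b) = δ a + δ b)
    (hmul : ∀ a b, δ (a * b) = a * δ b + δ a * b) : Derivation ℤ A A :=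
  Derivation.mk' (AddMonoidHom.mk' δ hadd).toIntLinearMap fun a b => by
    simp [hmul, mul_comm]

@[simp]
theorem ofLeibniz_apply {A : Type*} [CommRing A] (δ : A → A) (hadd : ∀ a b, δ (a + b) = δ a + δ b)
    (hmul : ∀ a b, δ (a * b) = a * δ b + δ a * b) (a : A) : ofLeibniz δ hadd hmul a = δ a := rfl

variable {F : Type*} [Field F]

def restrictSubfield (δ : Derivation ℤ F F) (K : Subfield F) (hK : ∀ a ∈ K, δ a ∈ K) :
    Derivation ℤ K K :=
  ofLeibniz (fun a => ⟨δ a, hK a a.2⟩) (fun a b => Subtype.ext (map_add δ (a : F) b))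
    (fun a b => Subtype.ext (by simp [mul_comm]))

@[simp]
theorem coe_restrictSubfield_apply (δ : Derivation ℤ F F) (K : Subfield F)
    (hK : ∀ a ∈ K, δ a ∈ K) (a : K) : (δ.restrictSubfield K hK a : F) = δ a := rfl

theorem leibniz_mul_pow_of_apply_eq_mul {A : Type*} [CommRing A] (δ : Derivation ℤ A A)
    {η p : A} (h : δ η = p * η) (a : A) (n : ℕ) :
    δ (a * η ^ n) = (δ a + n • p * a) * η ^ n := by
  rw [leibniz, leibniz_pow, h, smul_eq_mul, smul_eq_mul]
  rcases n with _ | n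
  · simp
  · simp only [nsmul_eq_mul, Nat.add_sub_cancel, pow_succ]
    ring

end Derivation

namespace HahnSeries

variable {Γ R : Type*} [AddCommMonoid Γ] [PartialOrder Γ] [CommRing R]
  (d : Derivation ℤ R R) (w : Γ →+ R)

def twistedDeriv (s : HahnSeries Γ R) : HahnSeries Γ R where
  coeff n := d (s.coeff n) + w n * s.coeff n
  isPWO_support' := s.isPWO_support.mono fun n hn h0 => hn (by simp [h0])

@[simp]
theorem coeff_twistedDeriv (s : HahnSeries Γ R) (n : Γ) :
    (twistedDeriv d w s).coeff n = d (s.coeff n) + w n * s.coeff n := rfl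

theorem support_twistedDeriv_subset (s : HahnSeries Γ R) :
    (twistedDeriv d w s).support ⊆ s.support :=
  fun n hn h0 => hn (by simp [h0])

theorem twistedDeriv_add (s t : HahnSeries Γ R) :
    twistedDeriv d w (s + t) = twistedDeriv d w s + twistedDeriv d w t := by
  ext n
  simp only [coeff_twistedDeriv, coeff_add, map_add]
  ring

theorem twistedDeriv_single (n : Γ) (r : R) :
    twistedDeriv d w (single n r) = single n (d r + w n * r) := by
  ext m
  by_cases h : m = n
  · subst h; simp
  · simp [coeff_single_of_ne h]

theorem twistedDeriv_mul [IsOrderedCancelAddMonoid Γ] (s t : HahnSeries Γ R) :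
    twistedDeriv d w (s * t) = s * twistedDeriv d w t + twistedDeriv d w s * t := by
  ext n
  rw [coeff_add, coeff_mul_right' t.isPWO_support (support_twistedDeriv_subset d w t),
    coeff_mul_left' s.isPWO_support (support_twistedDeriv_subset d w s)]
  simp only [coeff_twistedDeriv, coeff_mul, map_sum, Finset.mul_sum, ← Finset.sum_add_distrib]
  refine Finset.sum_congr rfl fun ij hij => ?_
  rw [← (Finset.mem_antidiagonal.mp hij).2.2, map_add, Derivation.leibniz, smul_eq_mul,
    smul_eq_mul]
  ring

end HahnSeries

section

variable {F : Type*} [Field F]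

theorem IntermediateField.adjoin_simple_eq_top_of_closure_insert_eq_top {K : Subfield F} {η : F}
    (h : Subfield.closure (insert η (K : Set F)) = ⊤) : K⟮η⟯ = ⊤ := by
  apply IntermediateField.toSubfield_injective
  rwa [adjoin_toSubfield, Set.union_singleton, show Set.range (algebraMap K F) = K from
    Subtype.range_coe, top_toSubfield]

theorem RingHom.semiconj_derivation_of_closure_eq_top {L : Type*} [Field L] (ψ : F →+* L)
    (δ : Derivation ℤ F F) (D : Derivation ℤ L L) {s : Set F} (hs : Subfield.closure s = ⊤)
    (h : ∀ x ∈ s, ψ (δ x) = D (ψ x)) : Function.Semiconj ψ δ D := by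
  intro x
  have hx : x ∈ Subfield.closure s := hs ▸ Subfield.mem_top x
  induction hx using Subfield.closure_induction with
  | mem x hx => exact h x hx
  | one => simp
  | add x y _ _ hx hy => simp [hx, hy]
  | neg x _ hx => simp [hx]
  | inv x _ hx => simp [Derivation.leibniz_inv, hx]
  | mul x y _ _ hx hy => simp [Derivation.leibniz, hx, hy]

namespace Subfield

def HasCommutingRetraction (K : Subfield F) (δ : F → F) : Prop :=
  ∃ ρ : F →ₗ[K] K, ρ 1 = 1 ∧ ∀ x, (ρ (δ x) : F) = δ (ρ x)

variable {K : Subfield F}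

theorem HasCommutingRetraction.exists_eq_apply_add_mul {δ : F → F}
    (hK : K.HasCommutingRetraction δ) {p c g : F} (hp : p ∈ K) (hc : c ∈ K)
    (hg : δ g + p * g = c) : ∃ h ∈ K, c = δ h + p * h := by
  obtain ⟨ρ, hρ1, hρδ⟩ := hK
  have hρK : ∀ a ∈ K, ∀ x, (ρ (a * x) : F) = a * ρ x := fun a ha x =>
    congrArg Subtype.val (ρ.map_smul ⟨a, ha⟩ x)
  refine ⟨ρ g, (ρ g).2, ?_⟩
  calc c = ρ (c * 1) := by rw [hρK c hc, hρ1, OneMemClass.coe_one, mul_one]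
    _ = δ (ρ g) + p * ρ g := by rw [mul_one, ← hg, map_add, coe_add, hρδ, hρK p hp]

theorem hasCommutingRetraction_of_isIntegral (δ : Derivation ℤ F F) (hK : ∀ a ∈ K, δ a ∈ K)
    {η p : F} (hp : p ∈ K) (hδη : δ η = p * η) (hint : IsIntegral K η)
    (hadj : Algebra.adjoin K {η} = ⊤) : K.HasCommutingRetraction δ := by
  let pb := PowerBasis.ofAdjoinEqTop hint hadj
  let i₀ : Fin pb.dim := ⟨0, pb.dim_pos⟩
  have hb : ∀ i, pb.basis i = η ^ (i : ℕ) := fun i => by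
    rw [pb.coe_basis, PowerBasis.ofAdjoinEqTop_gen]
  refine ⟨pb.basis.coord i₀, ?_, fun x => ?_⟩
  · rw [show (1 : F) = pb.basis i₀ by simp [hb, i₀], Module.Basis.coord_apply,
      Module.Basis.repr_self, Finsupp.single_eq_same]
  have hδx : δ x = ∑ i, (δ.restrictSubfield K hK (pb.basis.repr x i) +
      (i : ℕ) • ⟨p, hp⟩ * pb.basis.repr x i) • pb.basis i := by
    conv_lhs => rw [← pb.basis.sum_repr x]
    simp [Subfield.smul_def, hb, Derivation.leibniz_mul_pow_of_apply_eq_mul δ hδη]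
  rw [hδx, Module.Basis.coord_apply, Module.Basis.repr_sum_self]
  simp [i₀]

open scoped RatFunc LaurentSeries in
theorem hasCommutingRetraction_of_transcendental (δ : Derivation ℤ F F) (hK : ∀ a ∈ K, δ a ∈ K)
    {η p : F} (hp : p ∈ K) (hδη : δ η = p * η) (htr : Transcendental K η)
    (hgen : Subfield.closure (insert η (K : Set F)) = ⊤) : K.HasCommutingRetraction δ := by
  let e : RatFunc K ≃ₐ[K] F := (RatFunc.algEquivOfTranscendental η htr).trans
    ((equivOfEq (adjoin_simple_eq_top_of_closure_insert_eq_top hgen)).trans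
      IntermediateField.topEquiv)
  let ψ : F →+* K⸨X⸩ := (algebraMap (RatFunc K) K⸨X⸩).comp e.symm.toRingHom
  let dK := δ.restrictSubfield K hK
  let w := zmultiplesHom K ⟨p, hp⟩
  let D := Derivation.ofLeibniz (A := K⸨X⸩) (HahnSeries.twistedDeriv dK w)
    (HahnSeries.twistedDeriv_add dK w) (HahnSeries.twistedDeriv_mul dK w)
  have hψK : ∀ a : K, ψ a = HahnSeries.single 0 a := fun a => by
    have : e.symm a = algebraMap K (RatFunc K) a := e.symm.commutes a
    simp [ψ, this, ← RatFunc.algebraMap_C, ← IsScalarTower.algebraMap_apply]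
  have hψη : ψ η = HahnSeries.single 1 1 := by
    have : e.symm η = RatFunc.X := e.symm_apply_eq.mpr (by simp [e])
    simp [ψ, this]
  have hψδ : Function.Semiconj ψ δ D :=
    ψ.semiconj_derivation_of_closure_eq_top δ D hgen <| by
      rintro x (rfl | hx)
      · rw [hδη, map_mul, ← show ((⟨p, hp⟩ : K) : F) = p from rfl, hψK, hψη]
        simp [D, HahnSeries.twistedDeriv_single, w, dK]
      · lift x to K using hx
        rw [← δ.coe_restrictSubfield_apply K hK, hψK, hψK]
        simp [D, HahnSeries.twistedDeriv_single, dK]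
  let ρ : F →ₗ[K] K :=
    { toFun := fun x => (ψ x).coeff 0
      map_add' := by simp
      map_smul' := fun a x => by simp [Subfield.smul_def, hψK] }
  refine ⟨ρ, by simp [ρ], fun x => ?_⟩
  simp [ρ, hψδ.eq, D, dK]

theorem hasCommutingRetraction_of_closure_insert_eq_top (δ : Derivation ℤ F F)
    (hK : ∀ a ∈ K, δ a ∈ K) {η p : F} (hp : p ∈ K) (hδη : δ η = p * η)
    (hgen : Subfield.closure (insert η (K : Set F)) = ⊤) : K.HasCommutingRetraction δ := by
  by_cases halg : IsAlgebraic K η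
  · exact hasCommutingRetraction_of_isIntegral δ hK hp hδη halg.isIntegral
      ((adjoin_simple_eq_top_iff_of_isAlgebraic halg).mp
        (adjoin_simple_eq_top_of_closure_insert_eq_top hgen))
  · exact hasCommutingRetraction_of_transcendental δ hK hp hδη halg hgen

end Subfield

end

theorem reduction_lemma_single_derivation_general
    (F : Type*) [Field F]
    (δ : F → F)
    (hadd : ∀ a b : F, δ (a + b) = δ a + δ b)
    (hmul : ∀ a b : F, δ (a * b) = a * δ b + δ a * b)
    (K : Subfield F)
    (hKδ : ∀ a ∈ K, δ a ∈ K)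
    (η : F) (hη : η ≠ 0)
    (hgen : Subfield.closure (insert η (K : Set F)) = ⊤)
    (p : F) (hp : p ∈ K) (hδη : δ η = p * η)
    (c : F) (hc : c ∈ K) :
    (∃ f : F, δ f = c * η) ↔ (∃ h ∈ K, c = δ h + p * h) := by
  constructor
  · rintro ⟨f, hf⟩
    have hg : δ (f / η) + p * (f / η) = c := by
      refine mul_right_cancel₀ hη ?_
      have := hmul (f / η) η
      rw [div_mul_cancel₀ f hη, hf, hδη] at this
      linear_combination -this
    exact (Subfield.hasCommutingRetraction_of_closure_insert_eq_top
      (Derivation.ofLeibniz δ hadd hmul) hKδ hp hδη hgen).exists_eq_apply_add_mul hp hc hg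
  · rintro ⟨h, -, rfl⟩
    exact ⟨h * η, by rw [hmul, hδη]; ring⟩

/-- **Single-derivation core of the Reduction Lemma** (Lemma 3.1 of the paper).
Let `F` be a field of characteristic zero with a derivation `δ`, `K` a subfield closed
under `δ`, and `η ≠ 0` with `F = K(η)` and `δη = p·η` for some `p ∈ K`.  Then for every
`c ∈ K`:  `(∃ f ∈ F, δf = c·η) ↔ (∃ h ∈ K, c = δh + p·h)`. -/
theorem reduction_lemma_single_derivation
    (F : Type*) [Field F] [CharZero F]
    (δ : F → F)
    (hadd : ∀ a b : F, δ (a + b) = δ a + δ b)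
    (hmul : ∀ a b : F, δ (a * b) = a * δ b + δ a * b)
    (K : Subfield F)
    (hKδ : ∀ a ∈ K, δ a ∈ K)
    (η : F) (hη : η ≠ 0)
    (hgen : Subfield.closure (insert η (K : Set F)) = ⊤)
    (p : F) (hp : p ∈ K) (hδη : δ η = p * η)
    (c : F) (hc : c ∈ K) :
    (∃ f : F, δ f = c * η) ↔ (∃ h ∈ K, c = δ h + p * h) :=
  reduction_lemma_single_derivation_general F δ hadd hmul K hKδ η hη hgen p hp hδη c hc
end

section
/- Let F be a field of characteristic zero with a derivation δ, let K be a subfield of F closed under δ, and let η ∈ F be nonzero and algebraic over K of degree m ≥ 2, with F = K(η) and δη = p·η for some p ∈ K. Let c ∈ K and f ∈ F satisfy δf = c·η, and write f = Σ_{i=0}^{m−1} aᵢ·ηⁱ with a₀, …, a_{m−1} ∈ K (the unique representation of f in the K-basis 1, η, …, η^{m−1} of F). Then c = δa₁ + p·a₁; equivalently, δf = δ(a₁·η). -/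
/-!
Since `δ(ηⁱ) = i·p·ηⁱ`, differentiating `f = Σ aᵢ ηⁱ` termwise gives
`δf = Σ (δaᵢ + i·p·aᵢ) ηⁱ`, again a `K`-combination of `1, η, …, η^(m-1)`. These powers are
`K`-linearly independent, so comparing with `δf = c·η` at the coefficient of `η` gives
`c = δa₁ + p·a₁`.
-/

open Finset

def Derivation.ofLeibniz_s2 {A : Type*} [CommRing A] (δ : A → A)
    (hadd : ∀ a b : A, δ (a + b) = δ a + δ b)
    (hmul : ∀ a b : A, δ (a * b) = a * δ b + δ a * b) : Derivation ℤ A A :=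
  Derivation.mk' (AddMonoidHom.mk' δ hadd).toIntLinearMap fun a b => by
    simp [hmul, mul_comm]

namespace Derivation

variable {R A : Type*} [CommSemiring R] [CommSemiring A] [Algebra R A]
  (D : Derivation R A A) {η p : A}

theorem map_pow_of_map_eq_mul (h : D η = p * η) (n : ℕ) : D (η ^ n) = n * p * η ^ n := by
  rw [leibniz_pow, h]
  cases n with
  | zero => simp
  | succ n => simp only [nsmul_eq_mul, smul_eq_mul, Nat.add_sub_cancel, pow_succ]; ring

theorem map_sum_mul_pow_of_map_eq_mul (h : D η = p * η) (a : ℕ → A) (s : Finset ℕ) :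
    D (∑ i ∈ s, a i * η ^ i) = ∑ i ∈ s, (D (a i) + i * p * a i) * η ^ i := by
  rw [map_sum]
  refine sum_congr rfl fun i _ => ?_
  rw [leibniz, map_pow_of_map_eq_mul D h, smul_eq_mul, smul_eq_mul]
  ring

end Derivation

theorem Subfield.coeff_eq_of_sum_mul_pow_eq {F : Type*} [Field F] {K : Subfield F} {η : F}
    {b b' : ℕ → F} (hb : ∀ i < (minpoly K η).natDegree, b i ∈ K)
    (hb' : ∀ i < (minpoly K η).natDegree, b' i ∈ K)
    (h : ∑ i ∈ range (minpoly K η).natDegree, b i * η ^ i =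
      ∑ i ∈ range (minpoly K η).natDegree, b' i * η ^ i)
    {i : ℕ} (hi : i < (minpoly K η).natDegree) : b i = b' i :=
  congrArg Subtype.val <| Fintype.linearIndependent_iffₛ.mp (linearIndependent_pow η)
    (fun j => ⟨b j, hb j j.2⟩) (fun j => ⟨b' j, hb' j j.2⟩)
    (by simpa [Subfield.smul_def, Fin.sum_univ_eq_sum_range (fun j => b j * η ^ j),
      Fin.sum_univ_eq_sum_range (fun j => b' j * η ^ j)] using h) ⟨i, hi⟩

theorem reduction_lemma_algebraic_case_general
    (F : Type*) [Field F]
    (δ : F → F)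
    (hadd : ∀ a b : F, δ (a + b) = δ a + δ b)
    (hmul : ∀ a b : F, δ (a * b) = a * δ b + δ a * b)
    (K : Subfield F)
    (hKδ : ∀ a ∈ K, δ a ∈ K)
    (η : F)
    (m : ℕ) (hm : 2 ≤ m)
    (hdeg : (minpoly K η).natDegree = m)
    (p : F) (hp : p ∈ K) (hδη : δ η = p * η)
    (c : F) (hc : c ∈ K)
    (f : F) (hf : δ f = c * η)
    (a : ℕ → F) (haK : ∀ i < m, a i ∈ K)
    (hrep : f = ∑ i ∈ Finset.range m, a i * η ^ i) :
    c = δ (a 1) + p * a 1 := by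
  subst hdeg
  have one_lt_deg : 1 < (minpoly K η).natDegree := by omega
  have hδf : δ f = ∑ i ∈ range _, (δ (a i) + i * p * a i) * η ^ i :=
    hrep ▸ (Derivation.ofLeibniz_s2 δ hadd hmul).map_sum_mul_pow_of_map_eq_mul hδη a _
  have hcη : c * η = ∑ i ∈ range (minpoly K η).natDegree, (if i = 1 then c else 0) * η ^ i := by
    simp [ite_mul, one_lt_deg]
  have hcoeff := Subfield.coeff_eq_of_sum_mul_pow_eq
    (fun i hi => add_mem (hKδ _ (haK i hi)) (mul_mem (mul_mem (natCast_mem K i) hp) (haK i hi)))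
    (fun i _ => by split_ifs <;> simp [hc]) (hδf.symm.trans (hf.trans hcη)) one_lt_deg
  simpa using hcoeff.symm

/-- **Algebraic case in the proof of (2) ⟹ (3) of the Reduction Lemma** (Lemma 3.1).
Let `F` be a field of characteristic zero with a derivation `δ`, `K` a subfield closed
under `δ`, and `η ≠ 0` algebraic over `K` of degree `m ≥ 2`, with `F = K(η)` and
`δη = p·η`, `p ∈ K`.  If `c ∈ K` and `f ∈ F` satisfy `δf = c·η` and
`f = Σ_{i<m} aᵢ·ηⁱ` with `aᵢ ∈ K`, then `c = δa₁ + p·a₁`. -/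
theorem reduction_lemma_algebraic_case
    (F : Type*) [Field F] [CharZero F]
    (δ : F → F)
    (hadd : ∀ a b : F, δ (a + b) = δ a + δ b)
    (hmul : ∀ a b : F, δ (a * b) = a * δ b + δ a * b)
    (K : Subfield F)
    (hKδ : ∀ a ∈ K, δ a ∈ K)
    (η : F) (hη : η ≠ 0)
    (m : ℕ) (hm : 2 ≤ m)
    (halg : IsIntegral K η)
    (hdeg : (minpoly K η).natDegree = m)
    (hgen : Subfield.closure (insert η (K : Set F)) = ⊤)
    (p : F) (hp : p ∈ K) (hδη : δ η = p * η)
    (c : F) (hc : c ∈ K)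
    (f : F) (hf : δ f = c * η)
    (a : ℕ → F) (haK : ∀ i < m, a i ∈ K)
    (hrep : f = ∑ i ∈ Finset.range m, a i * η ^ i) :
    c = δ (a 1) + p * a 1 :=
  reduction_lemma_algebraic_case_general F δ hadd hmul K hKδ η m hm hdeg p hp hδη c hc f hf a haK
    hrep
end

section
/- Let K₀ be a field of characteristic zero with a derivation ∂ whose field of constants C = {c ∈ K₀ : ∂c = 0} is algebraically closed. Let B be a nonzero finite-dimensional C-linear subspace of K₀ (regarded as a C-vector space), and let a ∈ K₀ be nonzero. Then a·B = B (as subsets of K₀) if and only if ∂a = 0. -/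
/-- **Lemma 4.5 of the paper.**  Let `K₀` be a field of characteristic zero with a
derivation `∂` whose field of constants `C` is algebraically closed.  If `B` is a
nonzero finite-dimensional `C`-linear subspace of `K₀` and `a ∈ K₀` is nonzero, then
`a·B = B` (as subsets of `K₀`) iff `∂a = 0`. -/
theorem mul_stabilizes_constant_subspace_iff
    (K₀ : Type*) [Field K₀] [CharZero K₀]
    (dt : K₀ → K₀)
    (hadd : ∀ a b : K₀, dt (a + b) = dt a + dt b)
    (hmul : ∀ a b : K₀, dt (a * b) = a * dt b + dt a * b)
    (C : Subfield K₀)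
    (hC : ∀ c : K₀, c ∈ C ↔ dt c = 0)
    (hac : IsAlgClosed C)
    (B : Submodule C K₀) (hB : B ≠ ⊥) (hfin : FiniteDimensional C B)
    (a : K₀) (ha : a ≠ 0) :
    (a * ·) '' (B : Set K₀) = (B : Set K₀) ↔ dt a = 0 := by
  have hsmul : ∀ (c : C) (x : K₀), c • x = (c : K₀) * x := fun c x => rfl
  constructor
  · intro hBB
    have hsub : ∀ b : K₀, b ∈ B → a * b ∈ B := by
      intro b hb
      have : a * b ∈ (a * ·) '' (B : Set K₀) := ⟨b, hb, rfl⟩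
      rwa [hBB] at this
    let f : Module.End C B :=
      { toFun := fun b => ⟨a * (b : K₀), hsub b b.2⟩
        map_add' := by intro x y; ext; simp [mul_add]
        map_smul' := by
          intro c x; ext
          simp [hsmul]
          ring }
    have hnt : Nontrivial B := Submodule.nontrivial_iff_ne_bot.mpr hB
    obtain ⟨c, hc⟩ := Module.End.exists_eigenvalue f
    obtain ⟨b, hb⟩ := hc.exists_hasEigenvector
    have hbne : (b : K₀) ≠ 0 := fun h => hb.2 (Subtype.ext h)
    have heq : a * (b : K₀) = (c : K₀) * (b : K₀) := by
      have := hb.apply_eq_smul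
      have := congrArg (Subtype.val) this
      simpa [f, hsmul] using this
    have : a = (c : K₀) := mul_right_cancel₀ hbne heq
    rw [this]
    exact (hC _).mp c.2
  · intro hda
    have haC : a ∈ C := (hC a).mpr hda
    have haiC : a⁻¹ ∈ C := C.inv_mem haC
    ext x
    constructor
    · rintro ⟨b, hb, rfl⟩
      have := B.smul_mem ⟨a, haC⟩ hb
      simpa [hsmul] using this
    · intro hx
      refine ⟨a⁻¹ * x, ?_, by field_simp⟩
      have := B.smul_mem ⟨a⁻¹, haiC⟩ hx
      simpa [hsmul] using this
end
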